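/- Let T be a tree and T_1, ..., T_k subtrees whose roots share a common parent p. After a shallow fold replacing T_1, ..., T_k by a single tree T_f whose root is a child of p and whose children are the union of the children of the roots of the T_i, the set of leaves below p is unchanged, and for any two leaves x ∈ leaves(T_i), y ∈ leaves(T_j) with i ≠ j, the smallest cluster containing both x and y in the new tree has size |leaves(T_1)| + ... + |leaves(T_k)|. -/

import Mathlib

/-- A rooted tree with arbitrary branching, leaves labelled by data points. -/
inductive RT (α : Type) : Type
  | leaf : α → RT α
  | node : List (RT α) → RT α

mutual
  /-- The list of leaves (data points) of a tree. -/
  def RT.leavesR {α : Type} : RT α → List α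
    | .leaf a => [a]
    | .node cs => RT.leavesRL cs
  /-- The leaves of a forest. -/
  def RT.leavesRL {α : Type} : List (RT α) → List α
    | [] => []
    | c :: cs => c.leavesR ++ RT.leavesRL cs
end

mutual
  /-- The cluster of the lowest common ancestor of leaves `x` and `y`:
  the leaf set of the smallest subtree containing both. -/
  def RT.minclR {α : Type} [DecidableEq α] (x y : α) : RT α → Finset α
    | .leaf a => {a}
    | .node cs => RT.minclRL x y cs (RT.leavesRL cs).toFinset
  /-- Search the children for one containing both leaves; otherwise return
  the default (the current node's cluster). -/
  def RT.minclRL {α : Type} [DecidableEq α] (x y : α) :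
      List (RT α) → Finset α → Finset α
    | [], dflt => dflt
    | c :: cs, dflt =>
        if x ∈ c.leavesR ∧ y ∈ c.leavesR then RT.minclR x y c
        else RT.minclRL x y cs dflt
end

/-- The children of the root of a tree. -/
def RT.rootChildren {α : Type} : RT α → List (RT α)
  | .leaf _ => []
  | .node cs => cs

/-! Folding only regroups the forest `ts`: the grandchildren of `p` through the `T_i` become the
children of `T_f`, so `T_f` has exactly the leaves of `T_1, …, T_k`. Both `x` and `y` lie below
`T_f`, but no child of `T_f` holds both, since such a child sits below a single `T_m` and the
leaf sets of distinct `T_i` are disjoint. Hence the cluster of `x, y` is all of `leaves(T_f)`,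
whose size is the sum of the `|leaves(T_i)|` because the leaves are distinct. -/

theorem List.disjoint_get_of_nodup_flatMap {β γ : Type*} {l : List β} {f : β → List γ}
    (h : (l.flatMap f).Nodup) {i j : Fin l.length} (hij : i ≠ j) :
    (f (l.get i)).Disjoint (f (l.get j)) := by
  have hpw := (List.nodup_flatMap.mp h).2
  rcases lt_or_gt_of_ne hij with hlt | hgt
  · exact hpw.rel_get_of_lt hlt
  · exact (hpw.rel_get_of_lt hgt).symm

namespace RT

variable {α : Type}

theorem leavesRL_eq_flatMap : ∀ cs : List (RT α), leavesRL cs = cs.flatMap leavesR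
  | [] => rfl
  | c :: cs => by rw [leavesRL, List.flatMap_cons, leavesRL_eq_flatMap cs]

theorem leavesR_node (cs : List (RT α)) : (node cs).leavesR = cs.flatMap leavesR := by
  rw [leavesR, leavesRL_eq_flatMap]

theorem leavesR_eq_flatMap_rootChildren {t : RT α} (ht : ∃ cs, t = node cs) :
    t.leavesR = t.rootChildren.flatMap leavesR := by
  obtain ⟨cs, rfl⟩ := ht
  rw [leavesR_node, rootChildren]

theorem flatMap_rootChildren_flatMap_leavesR {ts : List (RT α)}
    (hnodes : ∀ t ∈ ts, ∃ cs, t = node cs) :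
    (ts.flatMap rootChildren).flatMap leavesR = ts.flatMap leavesR := by
  rw [List.flatMap_assoc]
  exact List.flatMap_congr fun t ht => (leavesR_eq_flatMap_rootChildren (hnodes t ht)).symm

theorem mem_leavesR_of_mem_rootChildren {t c : RT α} {a : α} (hc : c ∈ t.rootChildren)
    (ha : a ∈ c.leavesR) : a ∈ t.leavesR := by
  cases t with
  | leaf => simp [rootChildren] at hc
  | node cs => exact (leavesR_node cs).symm ▸ List.mem_flatMap_of_mem hc ha

section Mincl

variable [DecidableEq α] {x y : α}

theorem minclRL_of_forall_not_mem :
    ∀ (cs : List (RT α)) (d : Finset α),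
      (∀ c ∈ cs, ¬(x ∈ c.leavesR ∧ y ∈ c.leavesR)) → minclRL x y cs d = d
  | [], _, _ => rfl
  | c :: cs, d, h => by
    rw [minclRL, if_neg (h c List.mem_cons_self)]
    exact minclRL_of_forall_not_mem cs d fun c hc => h c (List.mem_cons_of_mem _ hc)

theorem minclR_node_of_forall_not_mem {cs : List (RT α)}
    (h : ∀ c ∈ cs, ¬(x ∈ c.leavesR ∧ y ∈ c.leavesR)) :
    minclR x y (node cs) = (node cs).leavesR.toFinset := by
  rw [minclR, minclRL_of_forall_not_mem cs _ h, leavesR]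

theorem minclR_node_cons_of_mem {c : RT α} (cs : List (RT α)) (hx : x ∈ c.leavesR)
    (hy : y ∈ c.leavesR) : minclR x y (node (c :: cs)) = minclR x y c := by
  rw [minclR, minclRL, if_pos ⟨hx, hy⟩]

end Mincl

theorem not_mem_leavesR_of_mem_flatMap_rootChildren {ts : List (RT α)}
    (hnd : (ts.flatMap leavesR).Nodup) {i j : Fin ts.length} (hij : i ≠ j) {x y : α}
    (hx : x ∈ (ts.get i).leavesR) (hy : y ∈ (ts.get j).leavesR) :
    ∀ c ∈ ts.flatMap rootChildren, ¬(x ∈ c.leavesR ∧ y ∈ c.leavesR) := by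
  rintro c hc ⟨hxc, hyc⟩
  obtain ⟨t, ht, hct⟩ := List.mem_flatMap.mp hc
  obtain ⟨m, rfl⟩ := List.get_of_mem ht
  have below_m : ∀ k : Fin ts.length, ∀ a ∈ (ts.get k).leavesR, a ∈ c.leavesR → k = m :=
    fun k a hak hac => by_contra fun hkm =>
      List.disjoint_get_of_nodup_flatMap hnd hkm hak (mem_leavesR_of_mem_rootChildren hct hac)
  exact hij ((below_m i x hx hxc).trans (below_m j y hy hyc).symm)

end RT

/-- Let `T_1, ..., T_k` (the list `ts`, with non-leaf roots)
be subtrees whose roots share the common parent `p = node (ts ++ rest)`.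
A shallow fold replaces them by the single tree
`Tf = node (⋃ children of roots of the T_i)`, giving `p' = node (Tf :: rest)`.
Then the leaves below `p` are unchanged, and for leaves `x ∈ leaves(T_i)`,
`y ∈ leaves(T_j)` with `i ≠ j`, the smallest cluster of `p'` containing both
has size `|leaves(T_1)| + ... + |leaves(T_k)|`. -/
theorem shallow_fold_leaves_and_lca {α : Type} [DecidableEq α]
    (ts rest : List (RT α)) (hne : ts ≠ [])
    (hnodes : ∀ t ∈ ts, ∃ cs, t = RT.node cs)
    (p : RT α) (hp : p = RT.node (ts ++ rest))
    (Tf : RT α) (hTf : Tf = RT.node (ts.flatMap RT.rootChildren))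
    (p' : RT α) (hp' : p' = RT.node (Tf :: rest))
    (hnodup : p.leavesR.Nodup) :
    p'.leavesR.toFinset = p.leavesR.toFinset ∧
      ∀ i j : Fin ts.length, i ≠ j →
        ∀ x ∈ (ts.get i).leavesR, ∀ y ∈ (ts.get j).leavesR,
          (RT.minclR x y p').card
            = (ts.map fun t => t.leavesR.length).sum := by
  subst hp hTf hp'
  have hTf_leaves : (RT.node (ts.flatMap RT.rootChildren)).leavesR = ts.flatMap RT.leavesR := by
    rw [RT.leavesR_node, RT.flatMap_rootChildren_flatMap_leavesR hnodes]
  have hnd : (ts.flatMap RT.leavesR).Nodup := by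
    rw [RT.leavesR_node, List.flatMap_append] at hnodup
    exact hnodup.of_append_left
  refine ⟨by rw [RT.leavesR_node, RT.leavesR_node, List.flatMap_cons, List.flatMap_append,
    hTf_leaves], fun i j hij x hx y hy => ?_⟩
  have mem_Tf : ∀ k : Fin ts.length, ∀ a ∈ (ts.get k).leavesR,
      a ∈ (RT.node (ts.flatMap RT.rootChildren)).leavesR :=
    fun k a ha => hTf_leaves ▸ List.mem_flatMap_of_mem (List.get_mem ts k) ha
  rw [RT.minclR_node_cons_of_mem rest (mem_Tf i x hx) (mem_Tf j y hy),
    RT.minclR_node_of_forall_not_mem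
      (RT.not_mem_leavesR_of_mem_flatMap_rootChildren hnd hij hx hy),
    hTf_leaves, List.toFinset_card_of_nodup hnd, List.length_flatMap]
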